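/- arXiv:1508.02819 — 3 statements merged into one kernel-verified Lean document; each statement's English description precedes it below -/
import Mathlib

section
/- Let C be a ternary [12,5] code satisfying conditions (C1), (C2), (C3) (as below), and let Pun(C) be its punctured code on the last two coordinates. If the minimum weight of Pun(C) is 4 or 5, then the minimum weight of C is at least 6. -/
/-! If `wt (punc c)` is 4 or 5 then it is nonzero mod 3, so (C1) forces both check symbols
`c 10` and `c 11` to be nonzero, and they add 2 to the weight. Otherwise `wt (punc c) ≥ 6`
already, because the minimum weight of `Pun(C)` is at least 4. -/

open Finset

/-- Hamming weight of a vector over `ZMod 3`. -/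
def wt {n : ℕ} (v : Fin n → ZMod 3) : ℕ :=
  (Finset.univ.filter fun i => v i ≠ 0).card

/-- Projection of a length-12 vector onto its first 10 coordinates. -/
def punc (c : Fin 12 → ZMod 3) : Fin 10 → ZMod 3 :=
  fun i => c (Fin.castLE (by norm_num) i)

/-- The linear projection deleting the last two coordinates. -/
def projL : (Fin 12 → ZMod 3) →ₗ[ZMod 3] (Fin 10 → ZMod 3) :=
  LinearMap.funLeft (ZMod 3) (ZMod 3) (Fin.castLE (by norm_num : (10:ℕ) ≤ 12))

/-- A set of vectors has minimum (nonzero) weight `d`. -/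
def hasMinWt {n : ℕ} (S : Set (Fin n → ZMod 3)) (d : ℕ) : Prop :=
  (∃ w ∈ S, w ≠ 0 ∧ wt w = d) ∧ ∀ w ∈ S, w ≠ 0 → d ≤ wt w

lemma wt_zero {n : ℕ} : wt (0 : Fin n → ZMod 3) = 0 := by
  simp [wt]

lemma wt_eq_wt_punc_add (c : Fin 12 → ZMod 3) :
    wt c = wt (punc c) + (if c 10 ≠ 0 then 1 else 0) + (if c 11 ≠ 0 then 1 else 0) := by
  simp only [wt, Finset.card_filter, punc]
  rw [Fin.sum_univ_castSucc, Fin.sum_univ_castSucc]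
  erw [Finset.card_filter]
  rfl

lemma wt_punc_le_wt (c : Fin 12 → ZMod 3) : wt (punc c) ≤ wt c := by
  rw [wt_eq_wt_punc_add c]
  omega

lemma wt_eq_wt_punc_add_two {c : Fin 12 → ZMod 3} (h10 : c 10 ≠ 0) (h11 : c 11 ≠ 0) :
    wt c = wt (punc c) + 2 := by
  rw [wt_eq_wt_punc_add c, if_pos h10, if_pos h11]

theorem stmt6_general (C : Submodule (ZMod 3) (Fin 12 → ZMod 3))
    (hC1 : ∀ c ∈ C, ((wt (punc c) : ZMod 3) = c 10 * c 11))
    (hC2 : ∀ c ∈ C, c ≠ 0 → 3 ≤ wt (punc c))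
    (hmin : hasMinWt (C.map projL : Set (Fin 10 → ZMod 3)) 4 ∨
            hasMinWt (C.map projL : Set (Fin 10 → ZMod 3)) 5) :
    ∀ c ∈ C, c ≠ 0 → 6 ≤ wt c := by
  intro c hc hc0
  have hpunc0 : punc c ≠ 0 := fun h => by
    have := hC2 c hc hc0
    rw [h, wt_zero] at this
    omega
  have hmem : punc c ∈ (C.map projL : Set (Fin 10 → ZMod 3)) := ⟨c, hc, rfl⟩
  have h4 : 4 ≤ wt (punc c) := by
    rcases hmin with h | h
    · exact h.2 _ hmem hpunc0
    · exact (h.2 _ hmem hpunc0).trans' (by norm_num)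
  rcases le_or_gt 6 (wt (punc c)) with h6 | h6
  · exact h6.trans (wt_punc_le_wt c)
  · have hprod : c 10 * c 11 ≠ 0 := by
      rw [← hC1 c hc, Ne, ZMod.natCast_eq_zero_iff]
      omega
    rw [wt_eq_wt_punc_add_two (left_ne_zero_of_mul hprod) (right_ne_zero_of_mul hprod)]
    omega

theorem stmt6 (C : Submodule (ZMod 3) (Fin 12 → ZMod 3))
    (hdim : Module.finrank (ZMod 3) C = 5)
    (hC1 : ∀ c ∈ C, ((wt (punc c) : ZMod 3) = c 10 * c 11))
    (hC2 : ∀ c ∈ C, c ≠ 0 → 3 ≤ wt (punc c))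
    (hC3 : ∀ c ∈ C, wt (punc c) = 3 → ¬(c 10 = 0 ∧ c 11 = 0))
    (hmin : hasMinWt (C.map projL : Set (Fin 10 → ZMod 3)) 4 ∨
            hasMinWt (C.map projL : Set (Fin 10 → ZMod 3)) 5) :
    ∀ c ∈ C, c ≠ 0 → 6 ≤ wt c :=
  stmt6_general C hC1 hC2 hmin
end

section
/- Let C be a ternary [12,5] code satisfying conditions (C1)–(C3). If the punctured code Pun(C) on the last two coordinates has minimum weight 3, then C has minimum weight 4. -/
open Finset

lemma wt_split (c : Fin 12 → ZMod 3) :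
    wt c = wt (punc c) + ((if c 10 ≠ 0 then 1 else 0) + (if c 11 ≠ 0 then 1 else 0)) := by
  simp only [wt, Finset.card_filter]
  rw [Fin.sum_univ_castSucc, Fin.sum_univ_castSucc, add_assoc]
  congr 1

lemma projL_eq (c : Fin 12 → ZMod 3) : projL c = punc c := rfl

theorem stmt7 (C : Submodule (ZMod 3) (Fin 12 → ZMod 3))
    (hdim : Module.finrank (ZMod 3) C = 5)
    (hC1 : ∀ c ∈ C, ((wt (punc c) : ZMod 3) = c 10 * c 11))
    (hC2 : ∀ c ∈ C, c ≠ 0 → 3 ≤ wt (punc c))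
    (hC3 : ∀ c ∈ C, wt (punc c) = 3 → ¬(c 10 = 0 ∧ c 11 = 0))
    (hmin : hasMinWt (C.map projL : Set (Fin 10 → ZMod 3)) 3) :
    hasMinWt (C : Set (Fin 12 → ZMod 3)) 4 := by
  obtain ⟨⟨w, hwS, hwne, hwwt⟩, hlb⟩ := hmin
  obtain ⟨c, hcC, hcw⟩ := Submodule.mem_map.mp hwS
  have hpw : wt (punc c) = 3 := by rw [← projL_eq, hcw, hwwt]
  have hcne : c ≠ 0 := by
    rintro rfl
    exact hwne (by rw [← hcw]; simp)
  have hne : ¬(c 10 = 0 ∧ c 11 = 0) := hC3 c hcC hpw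
  have h1 : (wt (punc c) : ZMod 3) = c 10 * c 11 := hC1 c hcC
  rw [hpw] at h1
  have hmul : c 10 * c 11 = 0 := by rw [← h1]; decide
  have hcases : c 10 = 0 ∨ c 11 = 0 := mul_eq_zero.mp hmul
  have hwt4 : wt c = 4 := by
    rw [wt_split, hpw]
    rcases hcases with h | h
    · have h11 : c 11 ≠ 0 := fun h' => hne ⟨h, h'⟩
      simp [h, h11]
    · have h10 : c 10 ≠ 0 := fun h' => hne ⟨h', h⟩
      simp [h, h10]
  refine ⟨⟨c, hcC, hcne, hwt4⟩, ?_⟩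
  intro v hvC hvne
  have h3 := hC2 v hvC hvne
  rw [wt_split v]
  rcases Nat.lt_or_ge (wt (punc v)) 4 with h4 | h4
  · have hp3 : wt (punc v) = 3 := le_antisymm (Nat.lt_succ_iff.mp h4) h3
    have hne' := hC3 v hvC hp3
    rw [hp3]
    rcases Decidable.em (v 10 = 0) with h | h
    · have : v 11 ≠ 0 := fun h' => hne' ⟨h, h'⟩
      simp [h, this]
    · simp [h]; omega
  · omega
end

section
/- Let C be a ternary [12,5] code satisfying conditions (C1)–(C3). Then the minimum weight of C is either 4 or 6; in particular C has no nonzero codeword of weight less than 4 and no codeword of weight 5. -/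
/-!
Write `w` for the weight of the `x`-part. By (C1), `3 ∣ w` exactly when `y₁ y₂ = 0`, so the
total weight `w + #{i | yᵢ ≠ 0}` is either `4` (when `w = 3` and exactly one `yᵢ` is nonzero) or at
least `6`.

A codeword of weight `6` always exists. The codewords with `y = 0` form a subspace of dimension at
least `5 - 2 = 3`, and by (C1)–(C3) its nonzero words have weight `6` or `9`. Suppose they all had
weight `9`, and take independent `u`, `v` in it. Over `𝔽₃`, every coordinate where `u` or `v` is
nonzero is nonzero in exactly three of `u`, `v`, `u + v`, `u - v`. So these four weights add up to
at most `3 · 10 < 36`, a contradiction.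
-/

open Finset

lemma wt_eq_sum {n : ℕ} (v : Fin n → ZMod 3) : wt v = ∑ i, if v i ≠ 0 then 1 else 0 :=
  card_filter _ _

lemma wt_le {n : ℕ} (v : Fin n → ZMod 3) : wt v ≤ n :=
  (card_filter_le _ _).trans (card_fin n).le

lemma wt_add_wt_add_wt_add_wt_sub {n : ℕ} (u v : Fin n → ZMod 3) :
    wt u + wt v + wt (u + v) + wt (u - v) = 3 * #{i | u i ≠ 0 ∨ v i ≠ 0} := by
  have key : ∀ a b : ZMod 3, (if a ≠ 0 then 1 else 0) + (if b ≠ 0 then 1 else 0) +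
      (if a + b ≠ 0 then 1 else 0) + (if a - b ≠ 0 then 1 else 0) =
      3 * if a ≠ 0 ∨ b ≠ 0 then 1 else 0 := by decide
  simp only [wt_eq_sum, card_filter, mul_sum, ← sum_add_distrib, Pi.add_apply, Pi.sub_apply, key]

lemma wt_add_wt_add_wt_add_wt_sub_le {n : ℕ} (u v : Fin n → ZMod 3) :
    wt u + wt v + wt (u + v) + wt (u - v) ≤ 3 * n := by
  rw [wt_add_wt_add_wt_add_wt_sub]
  exact Nat.mul_le_mul_left 3 ((card_le_univ _).trans (Fintype.card_fin n).le)

lemma three_dvd_wt_punc_iff {c : Fin 12 → ZMod 3}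
    (h1 : (wt (punc c) : ZMod 3) = c 10 * c 11) :
    3 ∣ wt (punc c) ↔ c 10 = 0 ∨ c 11 = 0 := by
  rw [← ZMod.natCast_eq_zero_iff, h1, mul_eq_zero]

lemma wt_eq_four_or_six_le {c : Fin 12 → ZMod 3}
    (h1 : (wt (punc c) : ZMod 3) = c 10 * c 11) (h2 : 3 ≤ wt (punc c))
    (h3 : wt (punc c) = 3 → ¬(c 10 = 0 ∧ c 11 = 0)) :
    wt c = 4 ∨ 6 ≤ wt c := by
  have hdvd := three_dvd_wt_punc_iff h1
  have hne3 : c 10 = 0 → c 11 = 0 → wt (punc c) ≠ 3 := fun h10 h11 h => h3 h ⟨h10, h11⟩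
  have := wt_le (punc c)
  rw [wt_eq_wt_punc_add]
  by_cases h10 : c 10 = 0 <;> by_cases h11 : c 11 = 0 <;>
    simp only [h10, h11, ne_eq, not_true_eq_false, not_false_eq_true, if_true, if_false,
      or_true, or_false, iff_true, iff_false, forall_const] at hdvd hne3 ⊢ <;>
    omega

lemma nine_le_wt_punc {c : Fin 12 → ZMod 3}
    (h1 : (wt (punc c) : ZMod 3) = c 10 * c 11) (h2 : 3 ≤ wt (punc c))
    (h3 : wt (punc c) = 3 → ¬(c 10 = 0 ∧ c 11 = 0))
    (h10 : c 10 = 0) (h11 : c 11 = 0) (h6 : wt c ≠ 6) :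
    9 ≤ wt (punc c) := by
  have hdvd := (three_dvd_wt_punc_iff h1).2 (Or.inl h10)
  have hne3 : wt (punc c) ≠ 3 := fun h => h3 h ⟨h10, h11⟩
  have hwt : wt c = wt (punc c) := by simp [wt_eq_wt_punc_add, h10, h11]
  have := wt_le (punc c)
  omega

lemma Submodule.exists_mem_add_sub_ne_zero {F V : Type*} [Field F] [AddCommGroup V] [Module F V]
    (K : Submodule F V) (hK : 1 < Module.finrank F K) :
    ∃ u ∈ K, ∃ v ∈ K, u ≠ 0 ∧ v ≠ 0 ∧ u + v ≠ 0 ∧ u - v ≠ 0 := by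
  have : Nontrivial K := Module.nontrivial_of_finrank_pos (R := F) (by omega)
  obtain ⟨x, hx⟩ := exists_ne (0 : K)
  obtain ⟨y, hxy⟩ := exists_linearIndependent_pair_of_one_lt_finrank hK hx
  have indep := LinearIndependent.pair_iff.mp hxy
  refine ⟨x, x.2, y, y.2, ?_, ?_, ?_, ?_⟩ <;>
    simp only [ne_eq, ← Submodule.coe_add, ← Submodule.coe_sub, Submodule.coe_eq_zero]
  · exact hx
  · intro h; simpa using indep 0 1 (by simp [h])
  · intro h; simpa using indep 1 1 (by simpa using h)
  · intro h; simpa using indep 1 (-1) (by simpa [← sub_eq_add_neg] using h)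

lemma Submodule.finrank_le_finrank_inf_ker_add {K V W : Type*} [Field K] [AddCommGroup V]
    [Module K V] [AddCommGroup W] [Module K W] [FiniteDimensional K V] [FiniteDimensional K W]
    (s : Submodule K V) (f : V →ₗ[K] W) :
    Module.finrank K s ≤ Module.finrank K ↥(s ⊓ LinearMap.ker f) + Module.finrank K W := by
  have := s.finrank_sup_add_finrank_inf_eq (LinearMap.ker f)
  have := (s ⊔ LinearMap.ker f).finrank_le
  have := f.finrank_range_add_finrank_ker
  have := (LinearMap.range f).finrank_le
  omega

lemma punc_add (u v : Fin 12 → ZMod 3) : punc (u + v) = punc u + punc v := rfl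

lemma punc_sub (u v : Fin 12 → ZMod 3) : punc (u - v) = punc u - punc v := rfl

lemma exists_wt_eq_six (C : Submodule (ZMod 3) (Fin 12 → ZMod 3))
    (hdim : Module.finrank (ZMod 3) C = 5)
    (hC1 : ∀ c ∈ C, ((wt (punc c) : ZMod 3) = c 10 * c 11))
    (hC2 : ∀ c ∈ C, c ≠ 0 → 3 ≤ wt (punc c))
    (hC3 : ∀ c ∈ C, wt (punc c) = 3 → ¬(c 10 = 0 ∧ c 11 = 0)) :
    ∃ c ∈ C, c ≠ 0 ∧ wt c = 6 := by
  by_contra! h6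
  let π : (Fin 12 → ZMod 3) →ₗ[ZMod 3] ZMod 3 × ZMod 3 :=
    (LinearMap.proj 10).prod (LinearMap.proj 11)
  have hK : 1 < Module.finrank (ZMod 3) ↥(C ⊓ LinearMap.ker π) := by
    have := C.finrank_le_finrank_inf_ker_add π
    simp only [Module.finrank_prod, Module.finrank_self] at this
    omega
  have h9 : ∀ c ∈ C ⊓ LinearMap.ker π, c ≠ 0 → 9 ≤ wt (punc c) := by
    rintro c ⟨hc, hπ⟩ hc0
    obtain ⟨h10, h11⟩ : c 10 = 0 ∧ c 11 = 0 := Prod.ext_iff.mp hπ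
    exact nine_le_wt_punc (hC1 c hc) (hC2 c hc hc0) (hC3 c hc) h10 h11 (h6 c hc hc0)
  obtain ⟨u, hu, v, hv, hu0, hv0, huv, huv'⟩ := (C ⊓ LinearMap.ker π).exists_mem_add_sub_ne_zero hK
  have := wt_add_wt_add_wt_add_wt_sub_le (punc u) (punc v)
  have := h9 u hu hu0
  have := h9 v hv hv0
  have := punc_add u v ▸ h9 _ (add_mem hu hv) huv
  have := punc_sub u v ▸ h9 _ (sub_mem hu hv) huv'
  omega

theorem stmt14 (C : Submodule (ZMod 3) (Fin 12 → ZMod 3))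
    (hdim : Module.finrank (ZMod 3) C = 5)
    (hC1 : ∀ c ∈ C, ((wt (punc c) : ZMod 3) = c 10 * c 11))
    (hC2 : ∀ c ∈ C, c ≠ 0 → 3 ≤ wt (punc c))
    (hC3 : ∀ c ∈ C, wt (punc c) = 3 → ¬(c 10 = 0 ∧ c 11 = 0)) :
    (hasMinWt (C : Set (Fin 12 → ZMod 3)) 4 ∨ hasMinWt (C : Set (Fin 12 → ZMod 3)) 6) ∧
    ∀ c ∈ C, c ≠ 0 → 4 ≤ wt c ∧ wt c ≠ 5 := by
  have hclass : ∀ c ∈ C, c ≠ 0 → wt c = 4 ∨ 6 ≤ wt c := fun c hc hc0 =>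
    wt_eq_four_or_six_le (hC1 c hc) (hC2 c hc hc0) (hC3 c hc)
  refine ⟨?_, fun c hc hc0 => by rcases hclass c hc hc0 with h | h <;> omega⟩
  by_cases h4 : ∃ c ∈ C, c ≠ 0 ∧ wt c = 4
  · exact Or.inl ⟨h4, fun c hc hc0 => by rcases hclass c hc hc0 with h | h <;> omega⟩
  · push Not at h4
    exact Or.inr ⟨exists_wt_eq_six C hdim hC1 hC2 hC3,
      fun c hc hc0 => (hclass c hc hc0).resolve_left (h4 c hc hc0)⟩
end
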